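/- arXiv:1711.06896 — 5 statements merged into one kernel-verified Lean document; each statement's English description precedes it below -/
import Mathlib

section
/- Let μ be a σ-finite measure on a measurable set X ⊂ ℝ, ζ : X → [0, ∞) a measurable function, and ε ∈ (0, 1) such that K(ε) := ∫_X e^{−εζ(x)} μ(dx) < ∞. Then for every λ > 0, ∫_X e^{λx − ζ(x)} μ(dx) ≤ K(ε) · exp( (1−ε) · ζ*( λ/(1−ε) ) ), where ζ*(t) = sup_{x∈X} (tx − ζ(x)). -/
open MeasureTheory Real
open scoped ENNReal

/-- **Saddle-point upper bound (2.5).**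
If `K(ε) = ∫_X e^{−ε ζ(x)} μ(dx) < ∞` for some `ε ∈ (0,1)`, then for every `λ > 0`,
`∫_X e^{λ x − ζ(x)} μ(dx) ≤ K(ε) · exp ((1−ε) ζ*(λ/(1−ε)))`, where
`ζ*(t) = sup_{x ∈ X} (t x − ζ x)` (the supremum is taken in `ℝ≥0∞` after exponentiation,
so that an infinite Young–Fenchel transform is handled correctly). -/
theorem saddle_point_bound_K (X : Set ℝ) (hX : MeasurableSet X)
    (μ : Measure ℝ) [SigmaFinite μ]
    (ζ : ℝ → ℝ) (hζm : Measurable ζ) (hζ0 : ∀ x ∈ X, 0 ≤ ζ x)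
    (ε : ℝ) (hε : ε ∈ Set.Ioo (0 : ℝ) 1)
    (hK : ∫⁻ x in X, ENNReal.ofReal (Real.exp (-ε * ζ x)) ∂μ < ⊤)
    (l : ℝ) (hl : 0 < l) :
    ∫⁻ x in X, ENNReal.ofReal (Real.exp (l * x - ζ x)) ∂μ ≤
      (∫⁻ x in X, ENNReal.ofReal (Real.exp (-ε * ζ x)) ∂μ) *
        ⨆ x ∈ X, ENNReal.ofReal (Real.exp ((1 - ε) * (l / (1 - ε) * x - ζ x))) := by
  set S := ⨆ x ∈ X, ENNReal.ofReal (Real.exp ((1 - ε) * (l / (1 - ε) * x - ζ x))) with hS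
  have h1ε : (1 : ℝ) - ε ≠ 0 := by linarith [hε.2]
  have hpt : ∀ x ∈ X, ENNReal.ofReal (Real.exp (l * x - ζ x)) ≤
      ENNReal.ofReal (Real.exp (-ε * ζ x)) * S := by
    intro x hx
    have hkey : l * x - ζ x = (-ε * ζ x) + (1 - ε) * (l / (1 - ε) * x - ζ x) := by
      field_simp
      ring
    have : ENNReal.ofReal (Real.exp (l * x - ζ x)) =
        ENNReal.ofReal (Real.exp (-ε * ζ x)) *
          ENNReal.ofReal (Real.exp ((1 - ε) * (l / (1 - ε) * x - ζ x))) := by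
      rw [hkey, Real.exp_add, ENNReal.ofReal_mul (Real.exp_pos _).le]
    rw [this]
    gcongr
    exact le_biSup (fun x => ENNReal.ofReal (Real.exp ((1 - ε) * (l / (1 - ε) * x - ζ x)))) hx
  calc ∫⁻ x in X, ENNReal.ofReal (Real.exp (l * x - ζ x)) ∂μ
      ≤ ∫⁻ x in X, ENNReal.ofReal (Real.exp (-ε * ζ x)) * S ∂μ := by
        refine setLIntegral_mono' hX hpt
    _ = (∫⁻ x in X, ENNReal.ofReal (Real.exp (-ε * ζ x)) ∂μ) * S := by
        exact lintegral_mul_const S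
          ((measurable_const.mul hζm).exp.ennreal_ofReal)
end

section
/- Let μ be a σ-finite measure on [0, ∞), ζ : [0, ∞) → [0, ∞) a measurable function, and ε ∈ (0, 1) such that R(ε) := ∫_{[0,∞)} e^{ζ((1−ε)x) − ζ(x)} μ(dx) < ∞. Then for every λ > 0, ∫_{[0,∞)} e^{λx − ζ(x)} μ(dx) ≤ R(ε) · exp( ζ*( λ/(1−ε) ) ), where ζ*(t) = sup_{x ≥ 0} (tx − ζ(x)). -/
open MeasureTheory Real
open scoped ENNReal

/-- **Saddle-point upper bound (2.9).**
If `R(ε) = ∫_{[0,∞)} e^{ζ((1−ε)x) − ζ(x)} μ(dx) < ∞` for some `ε ∈ (0,1)`, then for every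
`λ > 0`, `∫_{[0,∞)} e^{λ x − ζ(x)} μ(dx) ≤ R(ε) · exp (ζ*(λ/(1−ε)))`, where
`ζ*(t) = sup_{x ≥ 0} (t x − ζ x)` (the supremum is taken in `ℝ≥0∞` after exponentiation,
so that an infinite Young–Fenchel transform is handled correctly). -/
theorem saddle_point_bound_R (μ : Measure ℝ) [SigmaFinite μ]
    (ζ : ℝ → ℝ) (hζm : Measurable ζ) (hζ0 : ∀ x ≥ (0 : ℝ), 0 ≤ ζ x)
    (ε : ℝ) (hε : ε ∈ Set.Ioo (0 : ℝ) 1)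
    (hR : ∫⁻ x in Set.Ici (0 : ℝ),
        ENNReal.ofReal (Real.exp (ζ ((1 - ε) * x) - ζ x)) ∂μ < ⊤)
    (l : ℝ) (hl : 0 < l) :
    ∫⁻ x in Set.Ici (0 : ℝ), ENNReal.ofReal (Real.exp (l * x - ζ x)) ∂μ ≤
      (∫⁻ x in Set.Ici (0 : ℝ), ENNReal.ofReal (Real.exp (ζ ((1 - ε) * x) - ζ x)) ∂μ) *
        ⨆ x ∈ Set.Ici (0 : ℝ), ENNReal.ofReal (Real.exp (l / (1 - ε) * x - ζ x)) := by
  set S := ⨆ x ∈ Set.Ici (0 : ℝ), ENNReal.ofReal (Real.exp (l / (1 - ε) * x - ζ x)) with hS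
  have h1ε : (0 : ℝ) < 1 - ε := by linarith [hε.2]
  have key : ∀ x ∈ Set.Ici (0 : ℝ),
      ENNReal.ofReal (Real.exp (l * x - ζ x)) ≤
        ENNReal.ofReal (Real.exp (ζ ((1 - ε) * x) - ζ x)) * S := by
    intro x hx
    have hx' : (1 - ε) * x ∈ Set.Ici (0 : ℝ) :=
      mul_nonneg h1ε.le hx
    have hle : ENNReal.ofReal (Real.exp (l / (1 - ε) * ((1 - ε) * x) - ζ ((1 - ε) * x))) ≤ S :=
      le_iSup₂ (f := fun y (_ : y ∈ Set.Ici (0 : ℝ)) =>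
        ENNReal.ofReal (Real.exp (l / (1 - ε) * y - ζ y))) ((1 - ε) * x) hx'
    calc ENNReal.ofReal (Real.exp (l * x - ζ x))
        = ENNReal.ofReal (Real.exp (ζ ((1 - ε) * x) - ζ x)) *
            ENNReal.ofReal (Real.exp (l / (1 - ε) * ((1 - ε) * x) - ζ ((1 - ε) * x))) := by
          rw [← ENNReal.ofReal_mul (Real.exp_nonneg _), ← Real.exp_add]
          congr 1
          field_simp
          ring
      _ ≤ _ := mul_le_mul_right hle _
  calc ∫⁻ x in Set.Ici (0 : ℝ), ENNReal.ofReal (Real.exp (l * x - ζ x)) ∂μ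
      ≤ ∫⁻ x in Set.Ici (0 : ℝ),
          ENNReal.ofReal (Real.exp (ζ ((1 - ε) * x) - ζ x)) * S ∂μ := by
        refine setLIntegral_mono' measurableSet_Ici key
    _ = (∫⁻ x in Set.Ici (0 : ℝ),
          ENNReal.ofReal (Real.exp (ζ ((1 - ε) * x) - ζ x)) ∂μ) * S := by
        exact lintegral_mul_const S
          (by fun_prop)
end

section
/- (Theorem 3.1, part C.) Let ξ be a nonnegative random variable whose exponential tail function G(x) = −ln P(ξ > x) is super convex, i.e. convex and lower semicontinuous on [0, ∞). Let φ : [1, ∞) → [0, ∞) satisfy: (i) E exp(λξ) ≥ exp(φ(λ)) for all λ ≥ 1; (ii) φ belongs to the class W, i.e. there is c₁ ∈ (0, 1] with φ₁(λ) ≥ φ(c₁λ) for all λ ≥ 1, where φ₁(λ) = ln( (e^{φ(λ)} − 1)/λ ); (iii) there exists ε ∈ (0, 1) with K(ε) := ∫₀^∞ e^{−εG(x)} dx < ∞; (iv) φ*(x) := sup_{λ ≥ 1} (λx − φ(λ)) is finite for all x ≥ 1 and φ*(x)/x → ∞ as x → ∞. Then there exist a constant c > 0 and x₁ ≥ 1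 such that for all x ≥ x₁, G(x) ≤ φ*(c·x), i.e. P(ξ > x) ≥ exp( −φ*(c·x) ). -/
open MeasureTheory ProbabilityTheory Real Filter Set
open scoped ENNReal

/-!
Let `δ = 1 - ε` and let `s` be a subgradient of the convex function `G` at `x`, so that
`s t - G t ≤ s x - G x` for all `t ≥ 0`. If `δ s` is bounded, `G` grows at most linearly up to
`x`, which the superlinear `φ*` dominates. Otherwise `L = δ s` satisfies
`L t - G t ≤ L x - δ G x - ε G t`, and writing `E e^{Lξ} = 1 + ∫₀^∞ P(ξ > t) L e^{Lt} dt` gives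
`e^{φ L} - 1 ≤ L e^{L x - δ G x} K(ε)`. The class `W` condition turns this into
`φ (c₁ L) ≤ L x - δ G x + log K(ε)`, and Young's inequality for `φ*` at `x / c₁` yields
`δ G x ≤ φ*(x / c₁) + log K(ε)`. Finally `n φ*(y) ≤ φ*(n y) + (n - 1) φ*(1)` with `n = 2 / δ`
absorbs the factor `1 / δ` and the constant once `φ*(y)` is large.
-/

theorem ConvexOn.add_leftDeriv_mul_sub_le {S : Set ℝ} {f : ℝ → ℝ} {x t : ℝ}
    (hf : ConvexOn ℝ S f) (hx : x ∈ interior S) (ht : t ∈ S) :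
    f x + derivWithin f (Iio x) x * (t - x) ≤ f t := by
  rcases lt_trichotomy t x with htx | rfl | hxt
  · have h := hf.slope_le_leftDeriv_of_mem_interior ht hx htx
    rw [slope_def_field, div_le_iff₀ (sub_pos.2 htx)] at h
    linarith
  · simp
  · have h := (hf.leftDeriv_le_rightDeriv_of_mem_interior hx).trans
      (hf.rightDeriv_le_slope_of_mem_interior hx ht hxt)
    rw [slope_def_field, le_div_iff₀ (sub_pos.2 hxt)] at h
    linarith

section Fenchel

variable {φ : ℝ → ℝ}

noncomputable def fenchelIci (φ : ℝ → ℝ) (x : ℝ) : ℝ :=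
  sSup {y : ℝ | ∃ l : ℝ, 1 ≤ l ∧ y = l * x - φ l}

theorem mul_sub_le_fenchelIci {x l : ℝ}
    (hbdd : BddAbove {y : ℝ | ∃ l : ℝ, 1 ≤ l ∧ y = l * x - φ l}) (hl : 1 ≤ l) :
    l * x - φ l ≤ fenchelIci φ x :=
  le_csSup hbdd ⟨l, hl, rfl⟩

theorem sub_fenchelIci_one_le {l : ℝ}
    (hbdd : BddAbove {y : ℝ | ∃ l : ℝ, 1 ≤ l ∧ y = l * 1 - φ l}) (hl : 1 ≤ l) :
    l - fenchelIci φ 1 ≤ φ l := by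
  linarith [mul_sub_le_fenchelIci hbdd hl, mul_one l]

theorem mul_fenchelIci_le {B n z : ℝ} (hφ : ∀ l ≥ 1, -B ≤ φ l) (hn : 1 ≤ n)
    (hbdd : BddAbove {y : ℝ | ∃ l : ℝ, 1 ≤ l ∧ y = l * (n * z) - φ l}) :
    n * fenchelIci φ z ≤ fenchelIci φ (n * z) + (n - 1) * B := by
  have hn0 : 0 < n := by linarith
  rw [← le_div_iff₀' hn0]
  refine csSup_le ⟨1 * z - φ 1, 1, le_rfl, rfl⟩ ?_
  rintro _ ⟨l, hl, rfl⟩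
  rw [le_div_iff₀' hn0]
  have hφl : 0 ≤ (n - 1) * (φ l + B) := mul_nonneg (by linarith) (by linarith [hφ l hl])
  linarith [mul_sub_le_fenchelIci hbdd hl]

theorem le_fenchelIci_two_div_mul {B δ g b z : ℝ} (hφ : ∀ l ≥ 1, -B ≤ φ l) (hδ : 0 < δ)
    (hδ2 : δ ≤ 2) (hbdd : BddAbove {y : ℝ | ∃ l : ℝ, 1 ≤ l ∧ y = l * (2 / δ * z) - φ l})
    (hz : (2 - δ) * B + b ≤ fenchelIci φ z) (hg : δ * g ≤ fenchelIci φ z + b) :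
    g ≤ fenchelIci φ (2 / δ * z) := by
  have hamp := mul_le_mul_of_nonneg_left
    (mul_fenchelIci_le hφ (by rwa [le_div_iff₀ hδ, one_mul]) hbdd) hδ.le
  have hδδ : δ * (2 / δ) = 2 := by field_simp
  rw [mul_add, ← mul_assoc, hδδ, ← mul_assoc, mul_sub, hδδ, mul_one] at hamp
  exact le_of_mul_le_mul_left (by linarith) hδ

end Fenchel

theorem Filter.Tendsto.eventually_mul_add_le_comp_mul {f : ℝ → ℝ}
    (hf : Tendsto (fun x => f x / x) atTop atTop) {c : ℝ} (hc : 0 < c) (a b : ℝ) :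
    ∀ᶠ x in atTop, a * x + b ≤ f (c * x) := by
  have hlin : ∀ᶠ y in atTop, a / c * y + b ≤ f y := by
    filter_upwards [hf.eventually_ge_atTop (|a / c| + |b|), eventually_ge_atTop 1] with y hfy hy
    rw [le_div_iff₀ (by linarith)] at hfy
    nlinarith [le_abs_self (a / c), le_abs_self b, abs_nonneg (a / c), abs_nonneg b]
  filter_upwards [(tendsto_id.const_mul_atTop hc).eventually hlin] with x hx
  rwa [id, ← mul_assoc, div_mul_cancel₀ a hc.ne'] at hx

theorem intervalIntegral_mul_exp_mul (L a : ℝ) :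
    ∫ t in (0 : ℝ)..a, L * exp (L * t) = exp (L * a) - 1 := by
  rw [intervalIntegral.integral_const_mul, ← smul_eq_mul,
    intervalIntegral.smul_integral_comp_mul_left (f := exp), integral_exp, mul_zero, exp_zero]

section Moment

variable {α : Type*} [MeasurableSpace α] {μ : Measure α} [IsProbabilityMeasure μ] {ξ : α → ℝ}

theorem lintegral_exp_mul_eq (hξ : AEMeasurable ξ μ) (hξ_nonneg : 0 ≤ᵐ[μ] ξ) {L : ℝ} (hL : 0 ≤ L) :
    ∫⁻ ω, ENNReal.ofReal (exp (L * ξ ω)) ∂μ =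
      1 + ∫⁻ t in Ioi 0, μ {ω | t < ξ ω} * ENNReal.ofReal (L * exp (L * t)) := by
  have hg : Continuous fun t => L * exp (L * t) := by fun_prop
  rw [← lintegral_comp_eq_lintegral_meas_lt_mul μ hξ_nonneg hξ
    (fun _ _ => hg.intervalIntegrable _ _) (.of_forall fun t => by positivity)]
  simp_rw [intervalIntegral_mul_exp_mul]
  rw [← measure_univ (μ := μ), ← setLIntegral_one, Measure.restrict_univ,
    ← lintegral_add_left measurable_const]
  refine lintegral_congr_ae ?_
  filter_upwards [hξ_nonneg] with ω hω
  rw [← ENNReal.ofReal_one, ← ENNReal.ofReal_add zero_le_one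
    (sub_nonneg.2 (one_le_exp (mul_nonneg hL hω))), add_sub_cancel]

theorem lintegral_exp_mul_le_of_exponent_le (hξ : AEMeasurable ξ μ) (hξ_nonneg : 0 ≤ᵐ[μ] ξ)
    {G F : ℝ → ℝ} {L S : ℝ} (hL : 0 ≤ L)
    (htail : ∀ t > 0, μ {ω | t < ξ ω} ≤ ENNReal.ofReal (exp (-G t)))
    (hF : IntegrableOn (fun t => exp (F t)) (Ioi 0))
    (hexp : ∀ t > 0, L * t - G t ≤ S + F t) :
    ∫⁻ ω, ENNReal.ofReal (exp (L * ξ ω)) ∂μ ≤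
      ENNReal.ofReal (1 + L * exp S * ∫ t in Ioi 0, exp (F t)) := by
  rw [lintegral_exp_mul_eq hξ hξ_nonneg hL, ENNReal.ofReal_add zero_le_one (by positivity),
    ENNReal.ofReal_one, ← integral_const_mul,
    ofReal_integral_eq_lintegral_ofReal (hF.const_mul _) (.of_forall fun t => by positivity)]
  gcongr 1 + ?_
  refine setLIntegral_mono' measurableSet_Ioi fun t (ht : 0 < t) => ?_
  calc μ {ω | t < ξ ω} * ENNReal.ofReal (L * exp (L * t))
      ≤ ENNReal.ofReal (exp (-G t)) * ENNReal.ofReal (L * exp (L * t)) := by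
        gcongr; exact htail t ht
    _ = ENNReal.ofReal (L * exp (L * t - G t)) := by
      rw [← ENNReal.ofReal_mul (exp_pos _).le, sub_eq_add_neg, exp_add]; ring_nf
    _ ≤ ENNReal.ofReal (L * exp S * exp (F t)) := by
      rw [mul_assoc, ← exp_add]; gcongr; linarith [hexp t ht]

end Moment

theorem le_add_log_of_exp_le_one_add {a b L S K : ℝ} (ha : 0 < a) (hL : 0 < L)
    (hb : b ≤ log ((exp a - 1) / L)) (h : exp a ≤ 1 + L * exp S * K) : b ≤ S + log K := by
  have ha' : 0 < exp a - 1 := by linarith [add_one_lt_exp ha.ne']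
  have hK : 0 < K := by
    by_contra! hK
    nlinarith [mul_pos hL (exp_pos S)]
  calc b ≤ log ((exp a - 1) / L) := hb
    _ ≤ log (exp S * K) := log_le_log (by positivity) (by rw [div_le_iff₀ hL]; linarith)
    _ = S + log K := by rw [log_mul (exp_ne_zero S) hK.ne', log_exp]

theorem tail_exponent_le_linear_or_le_fenchelIci
    {α : Type*} [MeasurableSpace α] {μ : Measure α} [IsProbabilityMeasure μ]
    {ξ : α → ℝ} (hξ : AEMeasurable ξ μ) (hξ_nonneg : 0 ≤ᵐ[μ] ξ)
    {G : ℝ → ℝ} (htail : ∀ t > 0, μ {ω | t < ξ ω} ≤ ENNReal.ofReal (exp (-G t)))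
    (hG : ConvexOn ℝ (Ici 0) G) {φ : ℝ → ℝ}
    (hmgf : ∀ l ≥ (1 : ℝ),
      ENNReal.ofReal (exp (φ l)) ≤ ∫⁻ ω, ENNReal.ofReal (exp (l * ξ ω)) ∂μ)
    {c₁ : ℝ} (hc₁ : c₁ ∈ Ioc (0 : ℝ) 1)
    (hW : ∀ l ≥ (1 : ℝ), φ (c₁ * l) ≤ log ((exp (φ l) - 1) / l))
    {ε : ℝ} (hε : ε < 1) (hK : IntegrableOn (fun t => exp (-ε * G t)) (Ioi 0))
    (hbdd : ∀ x ≥ (1 : ℝ), BddAbove {y : ℝ | ∃ l : ℝ, 1 ≤ l ∧ y = l * x - φ l})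
    {x : ℝ} (hx : 1 ≤ x) :
    G x ≤ G 1 + max c₁⁻¹ (fenchelIci φ 1 + 1) / (1 - ε) * (x - 1) ∨
      (1 - ε) * G x ≤ fenchelIci φ (c₁⁻¹ * x) + log (∫ t in Ioi 0, exp (-ε * G t)) := by
  obtain ⟨hc₁0, hc₁1⟩ := hc₁
  have hδ : 0 < 1 - ε := sub_pos.2 hε
  set s := derivWithin G (Iio x) x
  have hsub : ∀ t ≥ 0, G x + s * (t - x) ≤ G t := fun t ht =>
    hG.add_leftDeriv_mul_sub_le (by rw [interior_Ici]; exact zero_lt_one.trans_le hx) ht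
  -- above this threshold `L = (1 - ε) s` has `c₁ L ≥ 1` and `φ L ≥ L - φ*(1) > 0`
  rcases lt_or_ge ((1 - ε) * s) (max c₁⁻¹ (fenchelIci φ 1 + 1)) with hs | hs
  · left
    have hs' : s ≤ max c₁⁻¹ (fenchelIci φ 1 + 1) / (1 - ε) := by
      rw [le_div_iff₀' hδ]; exact hs.le
    linarith [hsub 1 zero_le_one, mul_le_mul_of_nonneg_right hs' (sub_nonneg.2 hx)]
  · right
    set L := (1 - ε) * s
    have hc₁L : 1 ≤ c₁ * L := by
      have h := (le_max_left _ _).trans hs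
      rwa [inv_le_iff_one_le_mul₀' hc₁0] at h
    have hL : 1 ≤ L := by nlinarith
    have hφL : 0 < φ L := by
      linarith [sub_fenchelIci_one_le (hbdd 1 le_rfl) hL, (le_max_right _ _).trans hs]
    have hexp : ∀ t > 0, L * t - G t ≤ (L * x - (1 - ε) * G x) + -ε * G t := fun t ht => by
      nlinarith [mul_nonneg hδ.le (sub_nonneg.2 (hsub t ht.le))]
    have hmgf' := (ENNReal.ofReal_le_ofReal_iff (by positivity)).1 ((hmgf L hL).trans
      (lintegral_exp_mul_le_of_exponent_le hξ hξ_nonneg (by positivity) htail hK hexp))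
    have hlog := le_add_log_of_exp_le_one_add hφL (by positivity) (hW L hL) hmgf'
    have hy : 1 ≤ c₁⁻¹ * x := one_le_mul_of_one_le_of_one_le ((one_le_inv₀ hc₁0).2 hc₁1) hx
    have hyoung := mul_sub_le_fenchelIci (hbdd _ hy) hc₁L
    rw [show c₁ * L * (c₁⁻¹ * x) = L * x by field_simp] at hyoung
    linarith

theorem tail_lower_bound_C_general {Ω : Type*} [MeasureSpace Ω]
    [IsProbabilityMeasure (ℙ : Measure Ω)]
    (ξ : Ω → ℝ) (hξ : Measurable ξ) (hξ_nonneg : ∀ ω, 0 ≤ ξ ω)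
    (G : ℝ → ℝ) (hG : ∀ x > (0 : ℝ), (ℙ {ω | x < ξ ω}).toReal = Real.exp (-G x))
    (hG_convex : ConvexOn ℝ (Set.Ici 0) G)
    (φ : ℝ → ℝ)
    (hmgf : ∀ l ≥ (1 : ℝ),
      ENNReal.ofReal (Real.exp (φ l)) ≤ ∫⁻ ω, ENNReal.ofReal (Real.exp (l * ξ ω)) ∂ℙ)
    (c₁ : ℝ) (hc₁ : c₁ ∈ Set.Ioc (0 : ℝ) 1)
    (hW : ∀ l ≥ (1 : ℝ), φ (c₁ * l) ≤ Real.log ((Real.exp (φ l) - 1) / l))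
    (ε : ℝ) (hε : ε ∈ Set.Ioo (0 : ℝ) 1)
    (hKfin : IntegrableOn (fun x => Real.exp (-ε * G x)) (Set.Ioi 0))
    (φstar : ℝ → ℝ)
    (hφstar : ∀ x : ℝ, φstar x = sSup {y : ℝ | ∃ l : ℝ, 1 ≤ l ∧ y = l * x - φ l})
    (hφstar_fin : ∀ x ≥ (1 : ℝ), BddAbove {y : ℝ | ∃ l : ℝ, 1 ≤ l ∧ y = l * x - φ l})
    (hφstar_growth : Tendsto (fun x => φstar x / x) atTop atTop) :
    ∃ c : ℝ, 0 < c ∧ ∃ x₁ : ℝ, 1 ≤ x₁ ∧ ∀ x ≥ x₁,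
      G x ≤ φstar (c * x) ∧
      Real.exp (-(φstar (c * x))) ≤ (ℙ {ω | x < ξ ω}).toReal := by
  obtain rfl : φstar = fenchelIci φ := funext hφstar
  have htail (t : ℝ) (ht : 0 < t) : ℙ {ω | t < ξ ω} ≤ ENNReal.ofReal (exp (-G t)) := by
    rw [← hG t ht, ENNReal.ofReal_toReal (measure_ne_top _ _)]
  have hδ : 0 < 1 - ε := sub_pos.2 hε.2
  have hc₁inv : 1 ≤ c₁⁻¹ := (one_le_inv₀ hc₁.1).2 hc₁.2
  have hc : 0 < 2 / (1 - ε) * c₁⁻¹ := by positivity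
  have hdich (x : ℝ) (hx : 1 ≤ x) := tail_exponent_le_linear_or_le_fenchelIci hξ.aemeasurable
    (.of_forall hξ_nonneg) htail hG_convex hmgf hc₁ hW hε.2 hKfin hφstar_fin hx
  set B := fenchelIci φ 1
  set Λ := max c₁⁻¹ (B + 1)
  set K := ∫ t in Ioi 0, exp (-ε * G t)
  suffices h : ∀ᶠ x in atTop, G x ≤ fenchelIci φ (2 / (1 - ε) * c₁⁻¹ * x) by
    obtain ⟨x₁, hx₁⟩ := eventually_atTop.1 (h.and (eventually_gt_atTop 0))
    refine ⟨_, hc, max x₁ 1, le_max_right _ _, fun x hx => ?_⟩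
    obtain ⟨hGx, hx0⟩ := hx₁ x (le_of_max_le_left hx)
    exact ⟨hGx, by rw [hG x hx0]; exact exp_le_exp.2 (neg_le_neg hGx)⟩
  filter_upwards [eventually_ge_atTop 1,
    hφstar_growth.eventually_mul_add_le_comp_mul hc (Λ / (1 - ε)) (G 1 - Λ / (1 - ε)),
    hφstar_growth.eventually_mul_add_le_comp_mul (one_pos.trans_le hc₁inv) 0
      ((2 - (1 - ε)) * B + log K)] with x hx1 hlinear hconst
  rcases hdich x hx1 with h | h
  · linarith
  · rw [mul_assoc]
    refine le_fenchelIci_two_div_mul (B := B) (fun l hl => ?_) hδ (by linarith [hε.1])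
      (hφstar_fin _ ?_) (by linarith) h
    · linarith [sub_fenchelIci_one_le (hφstar_fin 1 le_rfl) hl]
    · exact one_le_mul_of_one_le_of_one_le (by rw [le_div_iff₀ hδ]; linarith [hε.1])
        (one_le_mul_of_one_le_of_one_le hc₁inv hx1)

/-- **Theorem 3.1, part C.**  Let `ξ ≥ 0` have a super convex exponential tail function `G`
(`P(ξ > x) = exp (−G x)`, `G` convex and lower semicontinuous on `[0,∞)`), and let
`φ : [1,∞) → [0,∞)` satisfy: (i) `E exp (λ ξ) ≥ exp (φ λ)` for all `λ ≥ 1`;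
(ii) `φ ∈ W`, i.e. `φ₁(λ) = ln ((e^{φ(λ)} − 1)/λ) ≥ φ(c₁ λ)` for some `c₁ ∈ (0,1]`;
(iii) `K(ε) = ∫₀^∞ e^{−ε G x} dx < ∞` for some `ε ∈ (0,1)`;
(iv) `φ*(x) = sup_{λ ≥ 1} (λ x − φ λ)` is finite for `x ≥ 1` and `φ*(x)/x → ∞`.
Then there are `c > 0` and `x₁ ≥ 1` with `G x ≤ φ*(c x)`, i.e.
`P(ξ > x) ≥ exp (−φ*(c x))`, for all `x ≥ x₁`. -/
theorem tail_lower_bound_C {Ω : Type*} [MeasureSpace Ω]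
    [IsProbabilityMeasure (ℙ : Measure Ω)]
    (ξ : Ω → ℝ) (hξ : Measurable ξ) (hξ_nonneg : ∀ ω, 0 ≤ ξ ω)
    (G : ℝ → ℝ) (hG : ∀ x > (0 : ℝ), (ℙ {ω | x < ξ ω}).toReal = Real.exp (-G x))
    (hG_convex : ConvexOn ℝ (Set.Ici 0) G)
    (hG_lsc : LowerSemicontinuousOn G (Set.Ici 0))
    (φ : ℝ → ℝ) (hφ_nonneg : ∀ l ≥ (1 : ℝ), 0 ≤ φ l)
    (hmgf : ∀ l ≥ (1 : ℝ),
      ENNReal.ofReal (Real.exp (φ l)) ≤ ∫⁻ ω, ENNReal.ofReal (Real.exp (l * ξ ω)) ∂ℙ)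
    (c₁ : ℝ) (hc₁ : c₁ ∈ Set.Ioc (0 : ℝ) 1)
    (hW : ∀ l ≥ (1 : ℝ), φ (c₁ * l) ≤ Real.log ((Real.exp (φ l) - 1) / l))
    (ε : ℝ) (hε : ε ∈ Set.Ioo (0 : ℝ) 1)
    (hKfin : IntegrableOn (fun x => Real.exp (-ε * G x)) (Set.Ioi 0))
    (φstar : ℝ → ℝ)
    (hφstar : ∀ x : ℝ, φstar x = sSup {y : ℝ | ∃ l : ℝ, 1 ≤ l ∧ y = l * x - φ l})
    (hφstar_fin : ∀ x ≥ (1 : ℝ), BddAbove {y : ℝ | ∃ l : ℝ, 1 ≤ l ∧ y = l * x - φ l})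
    (hφstar_growth : Tendsto (fun x => φstar x / x) atTop atTop) :
    ∃ c : ℝ, 0 < c ∧ ∃ x₁ : ℝ, 1 ≤ x₁ ∧ ∀ x ≥ x₁,
      G x ≤ φstar (c * x) ∧
      Real.exp (-(φstar (c * x))) ≤ (ℙ {ω | x < ξ ω}).toReal :=
  tail_lower_bound_C_general ξ hξ hξ_nonneg G hG hG_convex φ hmgf c₁ hc₁ hW ε hε hKfin φstar hφstar
    hφstar_fin hφstar_growth
end

section
/- (Theorem 4.1.) Let ξ be a real random variable, λ > 0 with E exp(λξ) < ∞, and φ₁(λ) a number with E exp(λξ) ≥ exp(φ₁(λ)). Let g : ℝ → ℝ be a convex differentiable function such that P(ξ > x) ≤ exp(−g(x)) for all x ∈ ℝ, and set S(x) = λx − g(x), a concave differentiable function. Let x_− < x_+ be points with S'(x_−) > 0 and S'(x_+) < 0. Then P(ξ > x_−) ≥ e^{−λ x_+} · [ e^{φ₁(λ)} − λ·e^{S(x_−)}/S'(x_−) − λ·e^{S(x_+)}/|S'(x_+)| ]. -/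
open MeasureTheory ProbabilityTheory Real Set

/-!
Write `η = exp (l ξ)`. By the layer-cake formula `E η = ∫_{t > 0} P(η > t) dt`, and
`P(η > t) = P(ξ > y) ≤ exp (S y - l y)` with `y = log t / l`. Replacing the concave `S` by its
tangent at `x₋` for `t ≤ e^{l x₋}` and by its tangent at `x₊` for `t > e^{l x₊}`, and bounding
`P(η > t) ≤ P(ξ > x₋)` in between, the pieces integrate to `l e^{S x₋} / S'(x₋)`,
at most `e^{l x₊} P(ξ > x₋)`, and `l e^{S x₊} / |S'(x₊)|`. Compare with `E η ≥ e^{φ₁}`.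
-/

lemma ConcaveOn.le_add_deriv_mul_sub {s : Set ℝ} {f : ℝ → ℝ} {x y : ℝ} (hf : ConcaveOn ℝ s f)
    (hx : x ∈ s) (hy : y ∈ s) (hd : DifferentiableAt ℝ f x) :
    f y ≤ f x + deriv f x * (y - x) := by
  rcases lt_trichotomy x y with hxy | rfl | hyx
  · have h := hf.slope_le_deriv hx hy hxy hd
    rw [slope_def_field, div_le_iff₀ (sub_pos.2 hxy)] at h
    linarith
  · simp
  · have h := hf.deriv_le_slope hy hx hyx hd
    rw [slope_def_field, le_div_iff₀ (sub_pos.2 hyx)] at h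
    linarith

/-- The bound `exp (S y - l * y)` at `y = log t / l`, with `S` replaced by its tangent at `x`. -/
noncomputable def tangentTail (S : ℝ → ℝ) (l x t : ℝ) : ℝ :=
  exp (S x - deriv S x * x) * t ^ (deriv S x / l - 1)

section tangentTail

variable {S : ℝ → ℝ} {l x t : ℝ}

lemma tangentTail_nonneg (ht : 0 ≤ t) : 0 ≤ tangentTail S l x t := by
  unfold tangentTail; positivity

lemma exp_sub_log_le_tangentTail (hS : ConcaveOn ℝ univ S) (hd : DifferentiableAt ℝ S x)
    (hl : 0 < l) (ht : 0 < t) :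
    exp (S (log t / l) - log t) ≤ tangentTail S l x t := by
  rw [tangentTail, rpow_def_of_pos ht, ← exp_add, exp_le_exp]
  have hlog : log t * (deriv S x / l - 1) = deriv S x * (log t / l) - log t := by
    field_simp
  linarith [hS.le_add_deriv_mul_sub (mem_univ x) (mem_univ (log t / l)) hd]

lemma integrableOn_tangentTail_Ioc (hl : 0 < l) (hd : 0 < deriv S x) :
    IntegrableOn (tangentTail S l x) (Ioc 0 (exp (l * x))) := by
  have h : IntegrableOn (fun t : ℝ ↦ t ^ (deriv S x / l - 1)) (Ioc 0 (exp (l * x))) :=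
    (intervalIntegrable_iff_integrableOn_Ioc_of_le (exp_pos _).le).mp
      (intervalIntegral.intervalIntegrable_rpow' (by linarith [div_pos hd hl]))
  exact h.const_mul _

lemma setIntegral_tangentTail_Ioc (hl : 0 < l) (hd : 0 < deriv S x) :
    ∫ t in Ioc 0 (exp (l * x)), tangentTail S l x t = l * exp (S x) / deriv S x := by
  have hp : 0 < deriv S x / l := div_pos hd hl
  simp only [tangentTail]
  rw [← intervalIntegral.integral_of_le (exp_pos _).le, intervalIntegral.integral_const_mul,
    integral_rpow (Or.inl (by linarith)), sub_add_cancel, zero_rpow hp.ne', sub_zero,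
    ← exp_mul, mul_div_assoc', ← exp_add]
  field_simp
  ring_nf

lemma integrableOn_tangentTail_Ioi (hl : 0 < l) (hd : deriv S x < 0) :
    IntegrableOn (tangentTail S l x) (Ioi (exp (l * x))) :=
  (integrableOn_Ioi_rpow_of_lt (by linarith [div_neg_of_neg_of_pos hd hl]) (exp_pos _)).const_mul _

lemma setIntegral_tangentTail_Ioi (hl : 0 < l) (hd : deriv S x < 0) :
    ∫ t in Ioi (exp (l * x)), tangentTail S l x t = l * exp (S x) / |deriv S x| := by
  simp only [tangentTail]
  rw [integral_const_mul, integral_Ioi_rpow_of_lt (by linarith [div_neg_of_neg_of_pos hd hl])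
    (exp_pos _), sub_add_cancel, ← exp_mul, abs_of_neg hd]
  field_simp
  rw [← exp_add, sub_add_cancel]

end tangentTail

lemma setOf_lt_exp_mul {Ω : Type*} {ξ : Ω → ℝ} {l t : ℝ} (hl : 0 < l) (ht : 0 < t) :
    {ω | t < exp (l * ξ ω)} = {ω | log t / l < ξ ω} := by
  ext ω
  exact ((div_lt_iff₀' hl).trans (log_lt_iff_lt_exp ht)).symm

section Tail

variable {Ω : Type*} [MeasurableSpace Ω] {μ : Measure Ω} {ξ : Ω → ℝ} {S : ℝ → ℝ} {l t : ℝ}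

lemma integral_le_integral_of_measureReal_lt_le {f : Ω → ℝ} {h : ℝ → ℝ} (hf : Integrable f μ)
    (hf0 : 0 ≤ f) (hh : Integrable h) (hh0 : 0 ≤ h)
    (hbound : ∀ t > 0, μ.real {ω | t < f ω} ≤ h t) :
    ∫ ω, f ω ∂μ ≤ ∫ t, h t := by
  rw [hf.integral_eq_integral_meas_lt (.of_forall hf0)]
  calc ∫ t in Ioi 0, μ.real {ω | t < f ω} ≤ ∫ t in Ioi 0, h t :=
        integral_mono_of_nonneg (.of_forall fun _ ↦ measureReal_nonneg) hh.integrableOn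
          ((ae_restrict_mem measurableSet_Ioi).mono hbound)
    _ ≤ ∫ t, h t := setIntegral_le_integral hh (.of_forall hh0)

lemma measureReal_lt_exp_mul_le_tangentTail {x : ℝ} (hl : 0 < l) (hS : ConcaveOn ℝ univ S)
    (hd : DifferentiableAt ℝ S x) (htail : ∀ y, μ.real {ω | y < ξ ω} ≤ exp (S y - l * y))
    (ht : 0 < t) :
    μ.real {ω | t < exp (l * ξ ω)} ≤ tangentTail S l x t := by
  rw [setOf_lt_exp_mul hl ht]
  refine (htail _).trans ?_
  rw [mul_div_cancel₀ _ hl.ne']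
  exact exp_sub_log_le_tangentTail hS hd hl ht

lemma measureReal_lt_exp_mul_le_of_exp_mul_le [IsFiniteMeasure μ] {x : ℝ} (hl : 0 < l)
    (hx : exp (l * x) ≤ t) :
    μ.real {ω | t < exp (l * ξ ω)} ≤ μ.real {ω | x < ξ ω} :=
  measureReal_mono fun _ hω ↦ lt_of_mul_lt_mul_left (exp_lt_exp.1 (hx.trans_lt hω)) hl.le

noncomputable def tailMajorant (S : ℝ → ℝ) (l xm xp T : ℝ) : ℝ → ℝ :=
  (Ioc 0 (exp (l * xm))).indicator (tangentTail S l xm)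
    + (Ioc 0 (exp (l * xp))).indicator (fun _ ↦ T)
    + (Ioi (exp (l * xp))).indicator (tangentTail S l xp)

section tailMajorant

variable {xm xp T : ℝ}

lemma tailMajorant_nonneg (hT : 0 ≤ T) : 0 ≤ tailMajorant S l xm xp T := fun t ↦
  add_nonneg (add_nonneg (indicator_nonneg (fun _ ht ↦ tangentTail_nonneg ht.1.le) t)
    (indicator_nonneg (fun _ _ ↦ hT) t))
    (indicator_nonneg (fun _ ht ↦ tangentTail_nonneg ((exp_pos _).trans ht).le) t)

lemma integrable_tailMajorant (hl : 0 < l) (hSm : 0 < deriv S xm) (hSp : deriv S xp < 0) :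
    Integrable (tailMajorant S l xm xp T) :=
  (((integrableOn_tangentTail_Ioc hl hSm).integrable_indicator measurableSet_Ioc).add
    ((integrableOn_const measure_Ioc_lt_top.ne).integrable_indicator measurableSet_Ioc)).add
    ((integrableOn_tangentTail_Ioi hl hSp).integrable_indicator measurableSet_Ioi)

lemma integral_tailMajorant (hl : 0 < l) (hSm : 0 < deriv S xm) (hSp : deriv S xp < 0) :
    ∫ t, tailMajorant S l xm xp T t
      = l * exp (S xm) / deriv S xm + exp (l * xp) * T + l * exp (S xp) / |deriv S xp| := by
  have hm := (integrableOn_tangentTail_Ioc hl hSm).integrable_indicator measurableSet_Ioc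
  have hT := (integrableOn_const (μ := volume) (C := T) measure_Ioc_lt_top.ne).integrable_indicator
    (measurableSet_Ioc (a := 0) (b := exp (l * xp)))
  have hp := (integrableOn_tangentTail_Ioi hl hSp).integrable_indicator measurableSet_Ioi
  rw [tailMajorant, integral_add' (hm.add hT) hp, integral_add' hm hT,
    integral_indicator measurableSet_Ioc, integral_indicator_const _ measurableSet_Ioc,
    integral_indicator measurableSet_Ioi, setIntegral_tangentTail_Ioc hl hSm,
    setIntegral_tangentTail_Ioi hl hSp, measureReal_def, Real.volume_Ioc, sub_zero,
    ENNReal.toReal_ofReal (exp_pos _).le, smul_eq_mul]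

lemma measureReal_lt_exp_mul_le_tailMajorant [IsFiniteMeasure μ] (hl : 0 < l)
    (hS : ConcaveOn ℝ univ S) (hdm : DifferentiableAt ℝ S xm) (hdp : DifferentiableAt ℝ S xp)
    (htail : ∀ y, μ.real {ω | y < ξ ω} ≤ exp (S y - l * y)) (ht : 0 < t) :
    μ.real {ω | t < exp (l * ξ ω)} ≤ tailMajorant S l xm xp (μ.real {ω | xm < ξ ω}) t := by
  have hm0 : 0 ≤ (Ioc 0 (exp (l * xm))).indicator (tangentTail S l xm) t :=
    indicator_nonneg (fun _ hs ↦ tangentTail_nonneg hs.1.le) t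
  have hT0 : 0 ≤ (Ioc 0 (exp (l * xp))).indicator (fun _ ↦ μ.real {ω | xm < ξ ω}) t :=
    indicator_nonneg (fun _ _ ↦ measureReal_nonneg) t
  have hp0 : 0 ≤ (Ioi (exp (l * xp))).indicator (tangentTail S l xp) t :=
    indicator_nonneg (fun _ hs ↦ tangentTail_nonneg ((exp_pos _).trans hs).le) t
  simp only [tailMajorant, Pi.add_apply]
  rcases le_or_gt t (exp (l * xm)) with htm | htm
  · rw [indicator_of_mem (mem_Ioc.2 ⟨ht, htm⟩)]
    linarith [measureReal_lt_exp_mul_le_tangentTail hl hS hdm htail ht]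
  rcases le_or_gt t (exp (l * xp)) with htp | htp
  · rw [indicator_of_mem (mem_Ioc.2 ⟨ht, htp⟩)]
    linarith [measureReal_lt_exp_mul_le_of_exp_mul_le (μ := μ) (ξ := ξ) hl htm.le]
  · rw [indicator_of_mem (mem_Ioi.2 htp)]
    linarith [measureReal_lt_exp_mul_le_tangentTail hl hS hdp htail ht]

theorem integral_exp_mul_le [IsFiniteMeasure μ] (hl : 0 < l)
    (hint : Integrable (fun ω ↦ exp (l * ξ ω)) μ) (hS : ConcaveOn ℝ univ S)
    (hdm : DifferentiableAt ℝ S xm) (hdp : DifferentiableAt ℝ S xp)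
    (hSm : 0 < deriv S xm) (hSp : deriv S xp < 0)
    (htail : ∀ y, μ.real {ω | y < ξ ω} ≤ exp (S y - l * y)) :
    ∫ ω, exp (l * ξ ω) ∂μ ≤ l * exp (S xm) / deriv S xm
      + exp (l * xp) * μ.real {ω | xm < ξ ω} + l * exp (S xp) / |deriv S xp| := by
  rw [← integral_tailMajorant hl hSm hSp]
  exact integral_le_integral_of_measureReal_lt_le hint (fun _ ↦ (exp_pos _).le)
    (integrable_tailMajorant hl hSm hSp) (tailMajorant_nonneg measureReal_nonneg)
    fun _ ht ↦ measureReal_lt_exp_mul_le_tailMajorant hl hS hdm hdp htail ht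

end tailMajorant

end Tail

theorem tail_lower_bound_bilateral_general {Ω : Type*} [MeasureSpace Ω]
    [IsProbabilityMeasure (ℙ : Measure Ω)]
    (ξ : Ω → ℝ)
    (l : ℝ) (hl : 0 < l)
    (hint : Integrable (fun ω => Real.exp (l * ξ ω)) ℙ)
    (φ₁ : ℝ) (hmgf : Real.exp φ₁ ≤ ∫ ω, Real.exp (l * ξ ω))
    (g : ℝ → ℝ) (hg_convex : ConvexOn ℝ Set.univ g) (hg_diff : Differentiable ℝ g)
    (htail : ∀ x : ℝ, (ℙ {ω | x < ξ ω}).toReal ≤ Real.exp (-g x))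
    (S : ℝ → ℝ) (hS : S = fun x => l * x - g x)
    (xm xp : ℝ)
    (hSm : 0 < deriv S xm) (hSp : deriv S xp < 0) :
    Real.exp (-(l * xp)) *
        (Real.exp φ₁ - l * Real.exp (S xm) / deriv S xm
          - l * Real.exp (S xp) / |deriv S xp|) ≤
      (ℙ {ω | xm < ξ ω}).toReal := by
  have hS_concave : ConcaveOn ℝ univ S := hS ▸ ((concaveOn_id convex_univ).smul hl.le).sub hg_convex
  have hS_diff : Differentiable ℝ S := hS ▸ by fun_prop
  have hS_tail (x : ℝ) : (ℙ : Measure Ω).real {ω | x < ξ ω} ≤ exp (S x - l * x) := by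
    simpa [hS, measureReal_def] using htail x
  have hmgf_le := hmgf.trans <| integral_exp_mul_le hl hint hS_concave (hS_diff xm) (hS_diff xp)
    hSm hSp hS_tail
  rw [exp_neg, inv_mul_le_iff₀ (exp_pos _), ← measureReal_def]
  linarith

/-- **Theorem 4.1.**  Let `ξ` be a real random variable, `λ > 0` with `E exp (λ ξ) < ∞` and
`E exp (λ ξ) ≥ exp (φ₁)`.  Let `g` be convex differentiable with `P(ξ > x) ≤ exp (−g x)` for
all `x`, and set `S x = λ x − g x` (concave differentiable).  If `x₋ < x₊` with `S'(x₋) > 0`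
and `S'(x₊) < 0`, then
`P(ξ > x₋) ≥ e^{−λ x₊} (e^{φ₁} − λ e^{S(x₋)}/S'(x₋) − λ e^{S(x₊)}/|S'(x₊)|)`. -/
theorem tail_lower_bound_bilateral {Ω : Type*} [MeasureSpace Ω]
    [IsProbabilityMeasure (ℙ : Measure Ω)]
    (ξ : Ω → ℝ) (hξ : Measurable ξ)
    (l : ℝ) (hl : 0 < l)
    (hint : Integrable (fun ω => Real.exp (l * ξ ω)) ℙ)
    (φ₁ : ℝ) (hmgf : Real.exp φ₁ ≤ ∫ ω, Real.exp (l * ξ ω))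
    (g : ℝ → ℝ) (hg_convex : ConvexOn ℝ Set.univ g) (hg_diff : Differentiable ℝ g)
    (htail : ∀ x : ℝ, (ℙ {ω | x < ξ ω}).toReal ≤ Real.exp (-g x))
    (S : ℝ → ℝ) (hS : S = fun x => l * x - g x)
    (xm xp : ℝ) (hx : xm < xp)
    (hSm : 0 < deriv S xm) (hSp : deriv S xp < 0) :
    Real.exp (-(l * xp)) *
        (Real.exp φ₁ - l * Real.exp (S xm) / deriv S xm
          - l * Real.exp (S xp) / |deriv S xp|) ≤
      (ℙ {ω | xm < ξ ω}).toReal :=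
  tail_lower_bound_bilateral_general ξ l hl hint φ₁ hmgf g hg_convex hg_diff htail S hS xm xp hSm
    hSp
end

section
/- (Example 3.1, subgaussian case.) Let δ ∈ (0, 1/2) and let ξ be a random variable such that exp( (1−δ²)·λ²/2 ) ≤ E exp(λξ) ≤ exp( λ²/2 ) for all λ ∈ ℝ. Then there exist an absolute constant c > 0 and z₀ ≥ 0 such that for all z ≥ z₀, P(ξ ≥ z) ≥ exp( −0.5·z²·(1 + cδ) ). -/
/-!
Take `t = (1 + 2δ) z` and split `E exp (t ξ)` according to whether `ξ < z`,
`z ≤ ξ ≤ (1 + 4δ) z` or `ξ > (1 + 4δ) z`. Comparing `exp (t ξ)` with `exp (z ξ)` on the first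
event and with `exp ((1 + 4δ) z ξ)` on the third, the upper bound on the moment generating
function bounds both outer contributions by `exp ((1 + 4δ) z² / 2)`. For large `z` this is
negligible against the lower bound `exp ((1 - δ²) t² / 2)`, so the middle event, which contributes
at most `exp (t (1 + 4δ) z) P(ξ ≥ z)`, carries at least half of the moment generating function.
-/

open MeasureTheory ProbabilityTheory Real

lemma exp_mul_le_add_add_indicator {s t u a b : ℝ} (hst : s ≤ t) (htu : t ≤ u) (ht : 0 ≤ t)
    (x : ℝ) :
    exp (t * x) ≤ exp ((t - s) * a) * exp (s * x) + exp (-((u - t) * b)) * exp (u * x)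
      + (Set.Ici a).indicator (fun _ => exp (t * b)) x := by
  simp only [← exp_add]
  have hpos₁ := (exp_pos ((t - s) * a + s * x)).le
  have hpos₂ := (exp_pos (-((u - t) * b) + u * x)).le
  have hpos₃ := (exp_pos (t * b)).le
  by_cases hxa : a ≤ x
  · rw [Set.indicator_of_mem (Set.mem_Ici.2 hxa)]
    rcases le_or_gt x b with hxb | hbx
    · have : exp (t * x) ≤ exp (t * b) := exp_le_exp.2 (by nlinarith)
      linarith
    · have : exp (t * x) ≤ exp (-((u - t) * b) + u * x) := exp_le_exp.2 (by nlinarith)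
      linarith
  · rw [Set.indicator_of_notMem (by simpa using hxa)]
    have : exp (t * x) ≤ exp ((t - s) * a + s * x) := exp_le_exp.2 (by nlinarith)
    linarith

lemma mgf_le_add_add_exp_mul_measureReal {Ω : Type*} [MeasurableSpace Ω] {μ : Measure Ω}
    [IsFiniteMeasure μ] {X : Ω → ℝ} (hX : Measurable X) {s t u a b : ℝ} (hst : s ≤ t)
    (htu : t ≤ u) (ht : 0 ≤ t) (hs : Integrable (fun ω => exp (s * X ω)) μ)
    (hu : Integrable (fun ω => exp (u * X ω)) μ) :
    mgf X μ t ≤ exp ((t - s) * a) * mgf X μ s + exp (-((u - t) * b)) * mgf X μ u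
      + exp (t * b) * μ.real {ω | a ≤ X ω} := by
  have hmeas : MeasurableSet {ω | a ≤ X ω} := hX measurableSet_Ici
  have hind : Integrable ({ω | a ≤ X ω}.indicator fun _ => exp (t * b)) μ :=
    (integrable_const _).indicator hmeas
  have hsu : Integrable (fun ω => exp ((t - s) * a) * exp (s * X ω)
      + exp (-((u - t) * b)) * exp (u * X ω)) μ := (hs.const_mul _).add (hu.const_mul _)
  calc mgf X μ t
      ≤ ∫ ω, (exp ((t - s) * a) * exp (s * X ω) + exp (-((u - t) * b)) * exp (u * X ω)
          + {ω | a ≤ X ω}.indicator (fun _ => exp (t * b)) ω) ∂μ :=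
        integral_mono_of_nonneg (.of_forall fun _ => (exp_pos _).le)
          (hsu.add hind)
          (.of_forall fun ω => exp_mul_le_add_add_indicator hst htu ht (X ω))
    _ = _ := by
        rw [integral_add hsu hind,
          integral_add (hs.const_mul _) (hu.const_mul _), integral_const_mul, integral_const_mul,
          integral_indicator_const _ hmeas, smul_eq_mul, mul_comm (μ.real _)]
        rfl

lemma exp_sub_sub_one_le_of_exp_le_add {L K A P : ℝ} (hA : 2 * A ≤ exp L)
    (h : exp L ≤ A + exp K * P) : exp (L - K - 1) ≤ P := by
  have hK := exp_pos K
  calc exp (L - K - 1) = exp L * exp (-1) / exp K := by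
        rw [sub_eq_add_neg, exp_add, exp_sub]; ring
    _ ≤ exp L * (1 / 2) / exp K := by gcongr; exact exp_neg_one_lt_half.le
    _ ≤ P := by rw [div_le_iff₀ hK]; linarith

lemma add_two_le_of_two_le_mul_one_sub_two_mul {δ z : ℝ} (hδ₀ : 0 < δ) (hδ : δ < 1 / 2)
    (hz : 2 ≤ z * δ * (1 - 2 * δ)) :
    (1 + 4 * δ) * z ^ 2 / 2 + 2 ≤ (1 - δ ^ 2) * ((1 + 2 * δ) * z) ^ 2 / 2 := by
  have hsq : (z * δ * (1 - 2 * δ)) ^ 2 ≤ z ^ 2 * δ ^ 2 * (1 - 2 * δ) :=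
    calc (z * δ * (1 - 2 * δ)) ^ 2 = z ^ 2 * δ ^ 2 * (1 - 2 * δ) ^ 2 := by ring
      _ ≤ z ^ 2 * δ ^ 2 * (1 - 2 * δ) := by gcongr; nlinarith
  nlinarith

lemma neg_le_sub_sub_one_of_two_le_mul_one_sub_two_mul {δ z : ℝ} (hδ₀ : 0 < δ)
    (hδ : δ < 1 / 2) (hz : 2 ≤ z * δ * (1 - 2 * δ)) :
    -(z ^ 2 * (1 + 17 * δ) / 2) ≤
      (1 - δ ^ 2) * ((1 + 2 * δ) * z) ^ 2 / 2 - (1 + 2 * δ) * z * ((1 + 4 * δ) * z) - 1 := by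
  have hz₁ : 2 ≤ z ^ 2 * δ := by
    have : z * (z * δ * (1 - 2 * δ)) ≤ z ^ 2 * δ := by nlinarith [sq_nonneg (z * δ)]
    have : 1 ≤ z := by
      nlinarith [sq_nonneg (4 * δ - 1), mul_pos hδ₀ (by linarith : 0 < 1 - 2 * δ)]
    nlinarith
  have hδ₃ : 13 * δ ^ 2 + 4 * δ ^ 3 + 4 * δ ^ 4 ≤ 8 * δ := by
    nlinarith [mul_pos hδ₀ hδ₀, pow_pos hδ₀ 3]
  nlinarith

lemma exp_le_measureReal_ge_of_mgf_sandwich {Ω : Type*} [MeasurableSpace Ω] {μ : Measure Ω}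
    [IsFiniteMeasure μ] {X : Ω → ℝ} (hX : Measurable X) {δ z : ℝ} (hδ₀ : 0 < δ)
    (hδ : δ < 1 / 2) (hint : ∀ l, Integrable (fun ω => exp (l * X ω)) μ)
    (hlow : ∀ l, exp ((1 - δ ^ 2) * l ^ 2 / 2) ≤ mgf X μ l)
    (hup : ∀ l, mgf X μ l ≤ exp (l ^ 2 / 2)) (hz : 2 ≤ z * δ * (1 - 2 * δ)) :
    exp (-(z ^ 2 * (1 + 17 * δ) / 2)) ≤ μ.real {ω | z ≤ X ω} := by
  have hz₀ : 0 < z := by nlinarith [mul_pos hδ₀ (by linarith : 0 < 1 - 2 * δ)]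
  have hsplit := mgf_le_add_add_exp_mul_measureReal hX (s := z) (t := (1 + 2 * δ) * z)
    (u := (1 + 4 * δ) * z) (a := z) (b := (1 + 4 * δ) * z) (by nlinarith) (by nlinarith)
    (by positivity) (hint _) (hint _)
  have hbelow : exp (((1 + 2 * δ) * z - z) * z) * mgf X μ z ≤ exp ((1 + 4 * δ) * z ^ 2 / 2) :=
    calc _ ≤ exp (((1 + 2 * δ) * z - z) * z) * exp (z ^ 2 / 2) := by gcongr; exact hup z
      _ = _ := by rw [← exp_add]; ring_nf
  have habove : exp (-(((1 + 4 * δ) * z - (1 + 2 * δ) * z) * ((1 + 4 * δ) * z)))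
      * mgf X μ ((1 + 4 * δ) * z) ≤ exp ((1 + 4 * δ) * z ^ 2 / 2) :=
    calc _ ≤ exp (-(((1 + 4 * δ) * z - (1 + 2 * δ) * z) * ((1 + 4 * δ) * z)))
          * exp (((1 + 4 * δ) * z) ^ 2 / 2) := by gcongr; exact hup _
      _ = _ := by rw [← exp_add]; ring_nf
  have hgap : 2 * (2 * exp ((1 + 4 * δ) * z ^ 2 / 2))
      ≤ exp ((1 - δ ^ 2) * ((1 + 2 * δ) * z) ^ 2 / 2) := by
    have h4 : 2 * 2 ≤ exp 2 := by
      rw [show (2 : ℝ) = 1 + 1 by norm_num, exp_add]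
      nlinarith [exp_one_gt_two]
    calc 2 * (2 * exp ((1 + 4 * δ) * z ^ 2 / 2)) ≤ exp (2 + (1 + 4 * δ) * z ^ 2 / 2) := by
          rw [exp_add, ← mul_assoc]; gcongr
      _ ≤ _ := exp_le_exp.2 (by linarith [add_two_le_of_two_le_mul_one_sub_two_mul hδ₀ hδ hz])
  refine (exp_le_exp.2 (neg_le_sub_sub_one_of_two_le_mul_one_sub_two_mul hδ₀ hδ hz)).trans
    (exp_sub_sub_one_le_of_exp_le_add hgap ?_)
  linarith [hlow ((1 + 2 * δ) * z)]

/-- **Example 3.1 (subgaussian case).**  There is an absolute constant `c > 0` such that for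
every `δ ∈ (0, 1/2)` and every random variable `ξ` with
`exp ((1 − δ²) λ²/2) ≤ E exp (λ ξ) ≤ exp (λ²/2)` for all real `λ`, one has
`P(ξ ≥ z) ≥ exp (−0.5 z² (1 + c δ))` for all sufficiently large `z`. -/
theorem subgaussian_tail_lower_bound {Ω : Type*} [MeasureSpace Ω]
    [IsProbabilityMeasure (ℙ : Measure Ω)] :
    ∃ c : ℝ, 0 < c ∧
      ∀ δ : ℝ, δ ∈ Set.Ioo (0 : ℝ) (1/2) →
      ∀ ξ : Ω → ℝ, Measurable ξ →
      (∀ l : ℝ, Integrable (fun ω => Real.exp (l * ξ ω)) ℙ) →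
      (∀ l : ℝ, Real.exp ((1 - δ ^ 2) * l ^ 2 / 2) ≤ ∫ ω, Real.exp (l * ξ ω)) →
      (∀ l : ℝ, ∫ ω, Real.exp (l * ξ ω) ≤ Real.exp (l ^ 2 / 2)) →
      ∃ z₀ : ℝ, 0 ≤ z₀ ∧ ∀ z ≥ z₀,
        Real.exp (-(0.5 * z ^ 2 * (1 + c * δ))) ≤ (ℙ {ω | z ≤ ξ ω}).toReal := by
  refine ⟨17, by norm_num, fun δ ⟨hδ₀, hδ⟩ ξ hξ hint hlow hup => ?_⟩
  have hδ' : 0 < δ * (1 - 2 * δ) := mul_pos hδ₀ (by linarith)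
  refine ⟨2 / (δ * (1 - 2 * δ)), by positivity, fun z hz => ?_⟩
  have hz' : 2 ≤ z * δ * (1 - 2 * δ) := by
    rw [ge_iff_le, div_le_iff₀ hδ'] at hz
    linarith
  rw [← measureReal_def]
  convert exp_le_measureReal_ge_of_mgf_sandwich hξ hδ₀ hδ hint hlow hup hz' using 2
  ring
end
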